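/- Let A be an anticommutative algebra over a field F of characteristic zero, G a torsion-free abelian group with nontrivial elements, λ a symmetric 2-cocycle, and consider the full extension L̂(A) = (A ⊗ F^t[G]) ⊕ V ⊕ V* with V = G ⊗_Z F central, V*V* = 0, and d·(x⊗t^σ) = d(σ) x⊗t^σ = -(x⊗t^σ)·d for d ∈ V*. If A has a symmetric invariant form, then L̂(A) is a Malcev algebra if and only if A is a Lie algebra (i.e. J(x,y,z) = 0 for all x,y,z), in which case L̂(A) is a Lie algebra. -/

import Mathlib

/-! In `L̂(A)` the Jacobian of three loop elements `x ⊗ t^α, y ⊗ t^β, z ⊗ t^γ` is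
`λ(α,β)λ(α+β,γ) J(x,y,z) ⊗ t^{α+β+γ}` plus a central term that cancels by invariance of the form
and the cocycle identity, and the elements of `V*` act as commuting derivations; so `L̂(A)` is Lie
as soon as `A` is. Conversely, the Malcev identity is quadratic in its first argument: comparing
it at `X = x ⊗ 1 + d` and at `X = x ⊗ 1`, with `Y = y ⊗ 1`, `Z = z ⊗ t^σ` and `d(σ) = 1`, leaves
`2 J(x,y,z) ⊗ t^σ = 0`. Such a `d` exists because `G` is torsion-free and `F` is divisible. -/

open TensorProduct

/-- The Jacobian. -/
def jac {A : Type*} [NonUnitalNonAssocRing A] (x y z : A) : A :=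
  (x * y) * z + (z * x) * y + (y * z) * x

/-- The loop algebra product on `A ⊗ F^t[G] ≅ (G →₀ A)`. -/
noncomputable def conv {F G A : Type*} [Field F] [AddCommGroup G]
    [NonUnitalNonAssocRing A] [Module F A]
    (l : G → G → F) (f g : G →₀ A) : G →₀ A :=
  f.sum fun σ x => g.sum fun τ y => Finsupp.single (σ + τ) (l σ τ • (x * y))

/-- The central term `Σ δ_{σ,-τ} λ(σ,τ)(x,y) σ` with values in `V = G ⊗_ℤ F`
(realized as `F ⊗[ℤ] G`, with `σ` identified with `1 ⊗ σ`). -/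
noncomputable def centralTerm {F G A : Type*} [Field F] [AddCommGroup G] [DecidableEq G]
    [NonUnitalNonAssocRing A] [Module F A]
    (l : G → G → F) (B : A →ₗ[F] A →ₗ[F] F) (f g : G →₀ A) : F ⊗[ℤ] G :=
  f.sum fun σ x => g.sum fun τ y =>
    if σ + τ = 0 then (l σ τ * B x y) • ((1 : F) ⊗ₜ[ℤ] σ) else 0

/-- The action of a derivation `d ∈ V*` on the loop algebra:
`d · (x ⊗ t^σ) = d(σ) x ⊗ t^σ`. -/
noncomputable def dAct {F G A : Type*} [Field F] [AddCommGroup G]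
    [NonUnitalNonAssocRing A] [Module F A]
    (d : (F ⊗[ℤ] G) →ₗ[F] F) (g : G →₀ A) : G →₀ A :=
  g.sum fun σ y => Finsupp.single σ (d ((1 : F) ⊗ₜ[ℤ] σ) • y)

/-- The product on the full extension `L̂(A) = (A ⊗ F^t[G]) ⊕ V ⊕ V*`, where `V` is
central, `V*V* = 0` and `d·(x⊗t^σ) = d(σ) x⊗t^σ = -(x⊗t^σ)·d` for `d ∈ V*`. -/
noncomputable def hmul {F G A : Type*} [Field F] [AddCommGroup G] [DecidableEq G]
    [NonUnitalNonAssocRing A] [Module F A]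
    (l : G → G → F) (B : A →ₗ[F] A →ₗ[F] F)
    (p q : (G →₀ A) × (F ⊗[ℤ] G) × ((F ⊗[ℤ] G) →ₗ[F] F)) :
    (G →₀ A) × (F ⊗[ℤ] G) × ((F ⊗[ℤ] G) →ₗ[F] F) :=
  (conv l p.1 q.1 + dAct p.2.2 q.1 - dAct q.2.2 p.1, centralTerm l B p.1 q.1, 0)

/-- The Jacobian with respect to the product of `L̂(A)`. -/
noncomputable def hjac {F G A : Type*} [Field F] [AddCommGroup G] [DecidableEq G]
    [NonUnitalNonAssocRing A] [Module F A]
    (l : G → G → F) (B : A →ₗ[F] A →ₗ[F] F)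
    (X Y Z : (G →₀ A) × (F ⊗[ℤ] G) × ((F ⊗[ℤ] G) →ₗ[F] F)) :
    (G →₀ A) × (F ⊗[ℤ] G) × ((F ⊗[ℤ] G) →ₗ[F] F) :=
  hmul l B (hmul l B X Y) Z + hmul l B (hmul l B Z X) Y + hmul l B (hmul l B Y Z) X

namespace Finsupp

variable {α M P : Type*} [AddZeroClass M] [AddGroup P]

theorem eq_zero_of_additive₂ {Φ : (α →₀ M) → (α →₀ M) → P}
    (hadd₁ : ∀ f₁ f₂ g, Φ (f₁ + f₂) g = Φ f₁ g + Φ f₂ g)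
    (hadd₂ : ∀ f g₁ g₂, Φ f (g₁ + g₂) = Φ f g₁ + Φ f g₂)
    (hsingle : ∀ a b x y, Φ (single a x) (single b y) = 0) : ∀ f g, Φ f g = 0 := by
  intro f g
  induction f using Finsupp.induction_linear with
  | zero => exact (AddMonoidHom.mk' (Φ · g) (hadd₁ · · g)).map_zero
  | add f₁ f₂ h₁ h₂ => rw [hadd₁, h₁, h₂, add_zero]
  | single a x =>
    induction g using Finsupp.induction_linear with
    | zero => exact (AddMonoidHom.mk' (Φ _) (hadd₂ _)).map_zero
    | add g₁ g₂ h₁ h₂ => rw [hadd₂, h₁, h₂, add_zero]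
    | single b y => exact hsingle a b x y

theorem eq_zero_of_additive₃ {Φ : (α →₀ M) → (α →₀ M) → (α →₀ M) → P}
    (hadd₁ : ∀ f₁ f₂ g h, Φ (f₁ + f₂) g h = Φ f₁ g h + Φ f₂ g h)
    (hadd₂ : ∀ f g₁ g₂ h, Φ f (g₁ + g₂) h = Φ f g₁ h + Φ f g₂ h)
    (hadd₃ : ∀ f g h₁ h₂, Φ f g (h₁ + h₂) = Φ f g h₁ + Φ f g h₂)
    (hsingle : ∀ a b c x y z, Φ (single a x) (single b y) (single c z) = 0) :
    ∀ f g h, Φ f g h = 0 := by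
  intro f g h
  induction f using Finsupp.induction_linear with
  | zero => exact (AddMonoidHom.mk' (Φ · g h) (hadd₁ · · g h)).map_zero
  | add f₁ f₂ h₁ h₂ => rw [hadd₁, h₁, h₂, add_zero]
  | single a x =>
    exact eq_zero_of_additive₂ (hadd₂ _) (hadd₃ _) (fun b c y z => hsingle a b c x y z) g h

end Finsupp

section Bilinear

variable {F G A : Type*} [Field F] [AddCommGroup G] [NonUnitalNonAssocRing A] [Module F A]
  (l : G → G → F) (d : (F ⊗[ℤ] G) →ₗ[F] F)

theorem conv_single (σ τ : G) (x y : A) :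
    conv l (Finsupp.single σ x) (Finsupp.single τ y)
      = Finsupp.single (σ + τ) (l σ τ • (x * y)) := by
  rw [conv, Finsupp.sum_single_index (by simp), Finsupp.sum_single_index (by simp)]

theorem conv_add_left (f₁ f₂ g : G →₀ A) :
    conv l (f₁ + f₂) g = conv l f₁ g + conv l f₂ g :=
  Finsupp.sum_add_index' (by simp [Finsupp.sum])
    (by simp [add_mul, smul_add, Finsupp.sum_add])

theorem conv_add_right (f g₁ g₂ : G →₀ A) :
    conv l f (g₁ + g₂) = conv l f g₁ + conv l f g₂ := by
  rw [conv, conv, conv, ← Finsupp.sum_add]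
  refine Finsupp.sum_congr fun σ _ => Finsupp.sum_add_index' (by simp) ?_
  simp [mul_add, smul_add]

theorem conv_zero_left (g : G →₀ A) : conv l 0 g = 0 :=
  (AddMonoidHom.mk' (conv l · g) (conv_add_left l · · g)).map_zero

theorem conv_sub_left (f₁ f₂ g : G →₀ A) :
    conv l (f₁ - f₂) g = conv l f₁ g - conv l f₂ g :=
  (AddMonoidHom.mk' (conv l · g) (conv_add_left l · · g)).map_sub f₁ f₂

theorem dAct_single (σ : G) (y : A) :
    dAct d (Finsupp.single σ y) = Finsupp.single σ (d ((1 : F) ⊗ₜ[ℤ] σ) • y) := by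
  rw [dAct, Finsupp.sum_single_index (by simp)]

theorem dAct_add (g₁ g₂ : G →₀ A) : dAct d (g₁ + g₂) = dAct d g₁ + dAct d g₂ := by
  unfold dAct
  exact Finsupp.sum_add_index' (by simp) (by simp [smul_add])

theorem dAct_zero : dAct d (0 : G →₀ A) = 0 :=
  (AddMonoidHom.mk' (dAct (A := A) d) (dAct_add d)).map_zero

theorem dAct_sub (g₁ g₂ : G →₀ A) : dAct d (g₁ - g₂) = dAct d g₁ - dAct d g₂ :=
  (AddMonoidHom.mk' (dAct (A := A) d) (dAct_add d)).map_sub g₁ g₂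

theorem zero_dAct (g : G →₀ A) : dAct (0 : (F ⊗[ℤ] G) →ₗ[F] F) g = 0 := by
  simp [dAct]

theorem dAct_dAct_comm (c : (F ⊗[ℤ] G) →ₗ[F] F) (g : G →₀ A) :
    dAct d (dAct c g) = dAct c (dAct d g) := by
  induction g using Finsupp.induction_linear with
  | zero => simp only [dAct_zero]
  | add g₁ g₂ h₁ h₂ => simp only [dAct_add, h₁, h₂]
  | single σ y => simp only [dAct_single, smul_smul, mul_comm]

end Bilinear

section CentralTerm

variable {F G A : Type*} [Field F] [AddCommGroup G] [DecidableEq G]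
  [NonUnitalNonAssocRing A] [Module F A] (l : G → G → F) (B : A →ₗ[F] A →ₗ[F] F)

theorem centralTerm_single (σ τ : G) (x y : A) :
    centralTerm l B (Finsupp.single σ x) (Finsupp.single τ y)
      = if σ + τ = 0 then (l σ τ * B x y) • ((1 : F) ⊗ₜ[ℤ] σ) else 0 := by
  rw [centralTerm, Finsupp.sum_single_index (by simp), Finsupp.sum_single_index (by simp)]

theorem centralTerm_add_left (f₁ f₂ g : G →₀ A) :
    centralTerm l B (f₁ + f₂) g = centralTerm l B f₁ g + centralTerm l B f₂ g := by
  refine Finsupp.sum_add_index' (by simp) fun σ x₁ x₂ => ?_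
  rw [← Finsupp.sum_add]
  refine Finsupp.sum_congr fun τ _ => ?_
  split_ifs <;> simp [mul_add, add_smul]

theorem centralTerm_add_right (f g₁ g₂ : G →₀ A) :
    centralTerm l B f (g₁ + g₂) = centralTerm l B f g₁ + centralTerm l B f g₂ := by
  rw [centralTerm, centralTerm, centralTerm, ← Finsupp.sum_add]
  refine Finsupp.sum_congr fun σ _ => Finsupp.sum_add_index' (by simp) fun τ y₁ y₂ => ?_
  split_ifs <;> simp [mul_add, add_smul]

theorem centralTerm_zero_left (g : G →₀ A) : centralTerm l B 0 g = 0 :=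
  (AddMonoidHom.mk' (centralTerm l B · g) (centralTerm_add_left l B · · g)).map_zero

theorem centralTerm_sub_left (f₁ f₂ g : G →₀ A) :
    centralTerm l B (f₁ - f₂) g = centralTerm l B f₁ g - centralTerm l B f₂ g :=
  (AddMonoidHom.mk' (centralTerm l B · g) (centralTerm_add_left l B · · g)).map_sub f₁ f₂

end CentralTerm

section Cocycle

variable {F G : Type*}

theorem cocycle_rotate [Add G] [Mul F] {l : G → G → F} (hlsymm : ∀ σ τ, l σ τ = l τ σ)
    (hlcoc : ∀ σ τ ρ, l σ τ * l (σ + τ) ρ = l τ ρ * l σ (τ + ρ)) (α β γ : G) :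
    l β γ * l (β + γ) α = l α β * l (α + β) γ := by
  rw [hlsymm (β + γ) α, hlcoc]

theorem cocycle_apply_zero_right [AddZeroClass G] [MonoidWithZero F] [IsRightCancelMulZero F]
    {l : G → G → F}
    (hl0 : l 0 0 = 1) (hlcoc : ∀ σ τ ρ, l σ τ * l (σ + τ) ρ = l τ ρ * l σ (τ + ρ))
    {σ : G} (hσ : l σ 0 ≠ 0) : l σ 0 = 1 := by
  refine mul_right_cancel₀ hσ ?_
  simpa [hl0] using hlcoc σ 0 0

end Cocycle

section Identities

variable {F G A : Type*} [Field F] [AddCommGroup G] [NonUnitalNonAssocRing A] [Module F A]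
  {l : G → G → F} (hlsymm : ∀ σ τ, l σ τ = l τ σ)
  (hlcoc : ∀ σ τ ρ, l σ τ * l (σ + τ) ρ = l τ ρ * l σ (τ + ρ))

include hlsymm in
theorem conv_skew (hanti : ∀ x y : A, x * y = -(y * x)) (f g : G →₀ A) :
    -conv l g f = conv l f g := by
  refine neg_eq_of_add_eq_zero_left ?_
  revert f g
  refine Finsupp.eq_zero_of_additive₂ ?_ ?_ fun σ τ x y => ?_
  iterate 2 (intros; simp only [conv_add_left, conv_add_right]; abel)
  rw [conv_single, conv_single, add_comm τ σ, hlsymm τ σ, hanti y x, smul_neg,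
    Finsupp.single_neg, add_neg_cancel]

include hlsymm hlcoc in
theorem conv_jacobi [IsScalarTower F A A] (hLie : ∀ x y z : A, jac x y z = 0)
    (f g h : G →₀ A) :
    conv l (conv l f g) h + conv l (conv l h f) g + conv l (conv l g h) f = 0 := by
  revert f g h
  refine Finsupp.eq_zero_of_additive₃ ?_ ?_ ?_ fun α β γ x y z => ?_
  iterate 3 (intros; simp only [conv_add_left, conv_add_right]; abel)
  simp only [conv_single, smul_mul_assoc, smul_smul]
  rw [show γ + α + β = α + β + γ by abel, show β + γ + α = α + β + γ by abel,
    mul_comm (l (γ + α) β), mul_comm (l (β + γ) α), mul_comm (l (α + β) γ),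
    cocycle_rotate hlsymm hlcoc β γ α, cocycle_rotate hlsymm hlcoc α β γ,
    ← Finsupp.single_add, ← Finsupp.single_add, ← smul_add, ← smul_add]
  rw [← jac, hLie, smul_zero, Finsupp.single_zero]

theorem dAct_conv [IsScalarTower F A A] [SMulCommClass F A A] (d : (F ⊗[ℤ] G) →ₗ[F] F)
    (g h : G →₀ A) : dAct d (conv l g h) = conv l (dAct d g) h + conv l g (dAct d h) := by
  rw [← sub_eq_zero]
  revert g h
  refine Finsupp.eq_zero_of_additive₂ ?_ ?_ fun σ τ x y => ?_
  iterate 2 (intros; simp only [conv_add_left, conv_add_right, dAct_add]; abel)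
  simp only [dAct_single, conv_single, smul_mul_assoc, mul_smul_comm, TensorProduct.tmul_add,
    map_add, ← Finsupp.single_add, ← Finsupp.single_sub, Finsupp.single_eq_zero]
  module

end Identities

section CentralTermIdentities

variable {F G A : Type*} [Field F] [AddCommGroup G] [DecidableEq G]
  [NonUnitalNonAssocRing A] [Module F A] {l : G → G → F} {B : A →ₗ[F] A →ₗ[F] F}
  (hsymm : ∀ x y : A, B x y = B y x) (hlsymm : ∀ σ τ, l σ τ = l τ σ)

include hsymm hlsymm in
theorem centralTerm_skew (f g : G →₀ A) : -centralTerm l B g f = centralTerm l B f g := by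
  refine neg_eq_of_add_eq_zero_left ?_
  revert f g
  refine Finsupp.eq_zero_of_additive₂ ?_ ?_ fun σ τ x y => ?_
  iterate 2 (intros; simp only [centralTerm_add_left, centralTerm_add_right]; abel)
  rw [centralTerm_single, centralTerm_single, add_comm τ σ]
  split_ifs with h
  · obtain rfl := eq_neg_of_add_eq_zero_right h
    rw [hlsymm, hsymm, TensorProduct.tmul_neg, smul_neg, add_neg_cancel]
  · rw [add_zero]

include hsymm hlsymm in
theorem centralTerm_dAct_comm (d : (F ⊗[ℤ] G) →ₗ[F] F) (g h : G →₀ A) :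
    centralTerm l B (dAct d g) h = centralTerm l B (dAct d h) g := by
  rw [← sub_eq_zero]
  revert g h
  refine Finsupp.eq_zero_of_additive₂ ?_ ?_ fun σ τ x y => ?_
  iterate 2 (intros; simp only [dAct_add, centralTerm_add_left, centralTerm_add_right]; abel)
  rw [dAct_single, dAct_single, centralTerm_single, centralTerm_single, add_comm τ σ]
  split_ifs with h
  · obtain rfl := eq_neg_of_add_eq_zero_right h
    simp only [TensorProduct.tmul_neg, map_neg, map_smul, LinearMap.smul_apply, smul_eq_mul,
      hlsymm (-σ) σ, hsymm y x]
    module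
  · rw [sub_zero]

include hsymm hlsymm in
theorem centralTerm_conv_cyclic (hinv : ∀ x y z : A, B (x * y) z = B x (y * z))
    (hlcoc : ∀ σ τ ρ, l σ τ * l (σ + τ) ρ = l τ ρ * l σ (τ + ρ)) (f g h : G →₀ A) :
    centralTerm l B (conv l f g) h + centralTerm l B (conv l h f) g
      + centralTerm l B (conv l g h) f = 0 := by
  revert f g h
  refine Finsupp.eq_zero_of_additive₃ ?_ ?_ ?_ fun α β γ x y z => ?_
  iterate 3 (intros; simp only [conv_add_left, conv_add_right, centralTerm_add_left,
    centralTerm_add_right]; abel)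
  simp only [conv_single, centralTerm_single, map_smul, LinearMap.smul_apply, smul_eq_mul]
  rw [show γ + α + β = α + β + γ by abel, show β + γ + α = α + β + γ by abel]
  split_ifs with h
  · have hB₁ : B (z * x) y = B (x * y) z := by rw [hinv, hsymm]
    have hB₂ : B (y * z) x = B (x * y) z := by rw [hsymm, ← hinv]
    have hsum : (α + β) + (γ + α) + (β + γ) = 0 := by
      rw [show (α + β) + (γ + α) + (β + γ) = (α + β + γ) + (α + β + γ) by abel, h, add_zero]
    rw [hB₁, hB₂, ← mul_assoc, ← mul_assoc, ← mul_assoc, mul_comm (l (γ + α) β),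
      mul_comm (l (β + γ) α), mul_comm (l (α + β) γ), cocycle_rotate hlsymm hlcoc β γ α,
      cocycle_rotate hlsymm hlcoc α β γ, ← smul_add, ← smul_add, ← TensorProduct.tmul_add,
      ← TensorProduct.tmul_add, hsum, TensorProduct.tmul_zero, smul_zero]
  · rw [add_zero, add_zero]

end CentralTermIdentities

section FullExtension

variable {F G A : Type*} [Field F] [AddCommGroup G] [DecidableEq G]
  [NonUnitalNonAssocRing A] [Module F A] {l : G → G → F} {B : A →ₗ[F] A →ₗ[F] F}
  (hanti : ∀ x y : A, x * y = -(y * x)) (hsymm : ∀ x y : A, B x y = B y x)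
  (hlsymm : ∀ σ τ, l σ τ = l τ σ)

include hanti hsymm hlsymm in
theorem hmul_skew (X Y : (G →₀ A) × (F ⊗[ℤ] G) × ((F ⊗[ℤ] G) →ₗ[F] F)) :
    hmul l B X Y = -(hmul l B Y X) := by
  simp only [hmul, Prod.neg_mk, neg_zero, ← conv_skew hlsymm hanti X.1,
    ← centralTerm_skew hsymm hlsymm X.1, neg_sub, Prod.mk.injEq, and_true]
  abel

theorem hmul_zero_left (X : (G →₀ A) × (F ⊗[ℤ] G) × ((F ⊗[ℤ] G) →ₗ[F] F)) :
    hmul l B 0 X = 0 := by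
  simp [hmul, conv_zero_left, dAct_zero, zero_dAct, centralTerm_zero_left]

include hanti hsymm hlsymm in
theorem hjac_eq_zero [IsScalarTower F A A] [SMulCommClass F A A]
    (hinv : ∀ x y z : A, B (x * y) z = B x (y * z))
    (hlcoc : ∀ σ τ ρ, l σ τ * l (σ + τ) ρ = l τ ρ * l σ (τ + ρ))
    (hLie : ∀ x y z : A, jac x y z = 0)
    (X Y Z : (G →₀ A) × (F ⊗[ℤ] G) × ((F ⊗[ℤ] G) →ₗ[F] F)) : hjac l B X Y Z = 0 := by
  obtain ⟨f, -, d⟩ := X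
  obtain ⟨g, -, e⟩ := Y
  obtain ⟨h, -, c⟩ := Z
  have hder (d : (F ⊗[ℤ] G) →ₗ[F] F) (g h : G →₀ A) :
      conv l (dAct d g) h - conv l (dAct d h) g - dAct d (conv l g h) = 0 := by
    rw [dAct_conv, ← conv_skew hlsymm hanti (dAct d h)]; abel
  simp only [hjac, hmul, Prod.mk_add_mk, Prod.mk_eq_zero, conv_add_left, conv_sub_left, dAct_add,
    dAct_sub, zero_dAct, centralTerm_add_left, centralTerm_sub_left, add_zero, and_true]
  constructor
  · rw [dAct_dAct_comm d c g, dAct_dAct_comm e c f, dAct_dAct_comm d e h]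
    linear_combination (norm := abel) conv_jacobi hlsymm hlcoc hLie f g h + hder d g h
      + hder e h f + hder c f g
  · linear_combination (norm := abel) centralTerm_conv_cyclic hsymm hlsymm hinv hlcoc f g h
      + centralTerm_dAct_comm hsymm hlsymm d g h + centralTerm_dAct_comm hsymm hlsymm e h f
      + centralTerm_dAct_comm hsymm hlsymm c f g

end FullExtension

theorem exists_dual_one_tmul_eq_one {F G : Type*} [Field F] [CharZero F] [AddCommGroup G]
    [NoZeroSMulDivisors ℤ G] {σ : G} (hσ : σ ≠ 0) :
    ∃ d : (F ⊗[ℤ] G) →ₗ[F] F, d ((1 : F) ⊗ₜ[ℤ] σ) = 1 := by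
  have hinj : Function.Injective (LinearMap.toSpanSingleton ℤ G σ) := fun a b hab =>
    smul_left_injective ℤ hσ (by simpa [LinearMap.toSpanSingleton_apply] using hab)
  obtain ⟨χ, hχ⟩ := (Module.Baer.of_divisible F).extension_property _ hinj
    (LinearMap.toSpanSingleton ℤ F 1)
  have hχσ : χ σ = 1 := by
    simpa [LinearMap.toSpanSingleton_apply] using LinearMap.congr_fun hχ 1
  exact ⟨TensorProduct.AlgebraTensorModule.lift (LinearMap.toSpanSingleton F (G →ₗ[ℤ] F) χ),
    by simp [LinearMap.toSpanSingleton_apply, hχσ]⟩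

section Malcev

variable {F G A : Type*} [Field F] [AddCommGroup G] [DecidableEq G]
  [NonUnitalNonAssocRing A] [Module F A]

noncomputable def malcevDefect (l : G → G → F) (B : A →ₗ[F] A →ₗ[F] F)
    (X Y Z : (G →₀ A) × (F ⊗[ℤ] G) × ((F ⊗[ℤ] G) →ₗ[F] F)) :
    (G →₀ A) × (F ⊗[ℤ] G) × ((F ⊗[ℤ] G) →ₗ[F] F) :=
  hjac l B X Y (hmul l B X Z) - hmul l B (hjac l B X Y Z) X

theorem malcevDefect_fst_sub [IsScalarTower F A A] {l : G → G → F} (B : A →ₗ[F] A →ₗ[F] F)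
    (hanti : ∀ x y : A, x * y = -(y * x)) (hlsymm : ∀ σ τ, l σ τ = l τ σ)
    (hl_zero : ∀ τ, l τ 0 = 1) {σ : G} {d : (F ⊗[ℤ] G) →ₗ[F] F}
    (hd : d ((1 : F) ⊗ₜ[ℤ] σ) = 1) (x y z : A) :
    (malcevDefect l B (.single 0 x, 0, d) (.single 0 y, 0, 0) (.single σ z, 0, 0)).1 σ
      - (malcevDefect l B (.single 0 x, 0, 0) (.single 0 y, 0, 0) (.single σ z, 0, 0)).1 σ
      = (2 : F) • jac x y z := by
  have hl_zero' (τ : G) : l 0 τ = 1 := by rw [hlsymm, hl_zero]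
  simp only [malcevDefect, hjac, hmul, conv_single, conv_add_left, conv_add_right, conv_sub_left,
    dAct_single, dAct_add, dAct_sub, hl_zero, hl_zero', hd, TensorProduct.tmul_zero, map_zero,
    LinearMap.zero_apply, zero_smul, one_smul, Finsupp.single_zero, add_zero, zero_add, sub_zero,
    Prod.fst_add, Prod.fst_sub, Finsupp.add_apply, Finsupp.sub_apply, Finsupp.single_apply, if_true]
  rw [jac, hanti z y, hanti (x * z) y, neg_mul]
  module

end Malcev

/-- For an anticommutative algebra `A` with a symmetric invariant form,
a torsion-free abelian group `G` with nontrivial elements and a symmetric 2-cocycle `λ`,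
the full extension `L̂(A) = (A ⊗ F^t[G]) ⊕ V ⊕ V*` is a Malcev algebra if and only if
`A` is a Lie algebra (`J(x,y,z) = 0` for all `x,y,z`), in which case `L̂(A)` is a Lie
algebra. -/
theorem full_extension_malcev_iff_lie {F G A : Type*} [Field F] [CharZero F]
    [AddCommGroup G] [DecidableEq G] [NoZeroSMulDivisors ℤ G]
    (hGne : ∃ σ : G, σ ≠ 0)
    [NonUnitalNonAssocRing A] [Module F A] [SMulCommClass F A A] [IsScalarTower F A A]
    (hanti : ∀ x y : A, x * y = -(y * x))
    (B : A →ₗ[F] A →ₗ[F] F)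
    (hsymm : ∀ x y : A, B x y = B y x)
    (hinv : ∀ x y z : A, B (x * y) z = B x (y * z))
    (l : G → G → F) (hl : ∀ σ τ : G, l σ τ ≠ 0) (hl0 : l 0 0 = 1)
    (hlsymm : ∀ σ τ : G, l σ τ = l τ σ)
    (hlcoc : ∀ σ τ ρ : G, l σ τ * l (σ + τ) ρ = l τ ρ * l σ (τ + ρ)) :
    (((∀ X Y : (G →₀ A) × (F ⊗[ℤ] G) × ((F ⊗[ℤ] G) →ₗ[F] F),
          hmul l B X Y = -(hmul l B Y X)) ∧
        (∀ X Y Z : (G →₀ A) × (F ⊗[ℤ] G) × ((F ⊗[ℤ] G) →ₗ[F] F),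
          hjac l B X Y (hmul l B X Z) = hmul l B (hjac l B X Y Z) X)) ↔
      (∀ x y z : A, jac x y z = 0)) ∧
    ((∀ x y z : A, jac x y z = 0) →
      ∀ X Y Z : (G →₀ A) × (F ⊗[ℤ] G) × ((F ⊗[ℤ] G) →ₗ[F] F),
        hjac l B X Y Z = 0) := by
  have hjac_of_lie := hjac_eq_zero hanti hsymm hlsymm hinv hlcoc
  refine ⟨⟨fun ⟨_, hM⟩ x y z => ?_,
    fun hLie => ⟨hmul_skew hanti hsymm hlsymm, fun X Y Z => ?_⟩⟩, hjac_of_lie⟩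
  · obtain ⟨σ, hσ⟩ := hGne
    obtain ⟨d, hd⟩ := exists_dual_one_tmul_eq_one (F := F) hσ
    have hl_zero (τ : G) : l τ 0 = 1 := cocycle_apply_zero_right hl0 hlcoc (hl τ 0)
    have h2J := malcevDefect_fst_sub B hanti hlsymm hl_zero hd x y z
    simp only [malcevDefect, hM, sub_self, Prod.fst_zero, Finsupp.coe_zero, Pi.zero_apply] at h2J
    exact (smul_eq_zero.mp h2J.symm).resolve_left two_ne_zero
  · rw [hjac_of_lie hLie, hjac_of_lie hLie, hmul_zero_left]
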